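/- Let G = (V,E) be a connected loopless multigraph, let λ_e > 0 for each e ∈ E, and assign each edge weight w(e) = 1/λ_e. Let b = |B(G)| be the maximum size of a bond of G, fix a minimum spanning tree T^OPT with respect to w, and for each e ∈ E define e* := e if e ∈ T^OPT, and otherwise let e* be a maximum-weight edge other than e on the unique cycle in T^OPT ∪ {e}. Then Σ_{e∈E} ( 1/b − λ_e/λ_{e*} ) ≤ 0. -/

import Mathlib

open scoped Classical

/-- A loopless multigraph on vertex type `V` with edge type `E`:
each edge has two distinct endpoints, parallel edges are allowed. -/
structure Multigraph (V : Type*) (E : Type*) where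
  ends : E → Sym2 V
  loopless : ∀ e, ¬ (ends e).IsDiag

namespace Multigraph

variable {V E : Type*} (G : Multigraph V E)

/-- `u` and `v` are joined by a walk using only edges in `F`. -/
def Reach (F : Set E) (u v : V) : Prop :=
  Relation.ReflTransGen (fun x y => ∃ e ∈ F, G.ends e = s(x, y)) u v

/-- The subgraph with edge set `F` (and all vertices) is connected. -/
def ConnectedOn (F : Set E) : Prop := ∀ u v : V, G.Reach F u v

/-- The multigraph is connected. -/
def Connected : Prop := G.ConnectedOn Set.univ

/-- A cut set of a connected multigraph: removing its edges disconnects the graph. -/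
def CutSet (C : Set E) : Prop := ¬ G.ConnectedOn Cᶜ

/-- A bond: an inclusion-wise minimal cut set. -/
def IsBond (C : Set E) : Prop := G.CutSet C ∧ ∀ C' ⊂ C, ¬ G.CutSet C'

/-- The maximum size of a bond, `|B(G)|`. -/
noncomputable def maxBondSize : ℕ := sSup {n | ∃ C : Set E, G.IsBond C ∧ C.ncard = n}

/-- A set of edges is acyclic (contains no cycle) iff no edge of it joins
two vertices that are already connected by the remaining edges. -/
def Acyclic (F : Set E) : Prop :=
  ∀ e ∈ F, ∀ u v : V, G.ends e = s(u, v) → ¬ G.Reach (F \ {e}) u v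

/-- A spanning tree: a set of `|V| - 1` edges containing no cycle. -/
def IsSpanningTree (T : Set E) : Prop :=
  T.ncard = Nat.card V - 1 ∧ G.Acyclic T

/-- The total weight of an edge set. -/
noncomputable def weight (w : E → ℝ) (T : Set E) : ℝ := ∑ᶠ e ∈ T, w e

/-- A minimum spanning tree with respect to edge weights `w`. -/
def IsMST (w : E → ℝ) (T : Set E) : Prop :=
  G.IsSpanningTree T ∧ ∀ T', G.IsSpanningTree T' → weight w T ≤ weight w T'

/-- `f` lies on the (unique) `u`-`v` path in the tree `T`: it belongs to `T` and
removing it from `T` disconnects `u` from `v`. -/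
def OnPath (T : Set E) (u v : V) (f : E) : Prop :=
  f ∈ T ∧ ¬ G.Reach (T \ {f}) u v

/-- The vertex identification produced by contracting the edge `e`. -/
def contractSetoid (e : E) : Setoid V where
  r x y := x = y ∨ G.ends e = s(x, y)
  iseqv := by
    refine ⟨fun x => Or.inl rfl, ?_, ?_⟩
    · rintro x y (rfl | h)
      · exact Or.inl rfl
      · right; rwa [Sym2.eq_swap]
    · rintro x y z (rfl | hxy) (rfl | hyz)
      · exact Or.inl rfl
      · exact Or.inr hyz
      · exact Or.inr hxy
      · rw [hxy] at hyz
        rw [Sym2.eq_iff] at hyz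
        rcases hyz with ⟨rfl, rfl⟩ | ⟨rfl, -⟩
        · exact Or.inl rfl
        · exact Or.inl rfl

/-- The contraction `G/e`: the endpoints of `e` are merged into a single vertex,
`e` is removed, and all resulting loops (the edges parallel to `e`) are deleted. -/
def contract (e : E) :
    Multigraph (Quotient (G.contractSetoid e)) {f : E // f ≠ e ∧ G.ends f ≠ G.ends e} where
  ends f := (G.ends f.1).map (Quotient.mk (G.contractSetoid e))
  loopless := by
    rintro ⟨f, hfe, hff⟩ h
    obtain ⟨x, y, hf⟩ : ∃ x y, G.ends f = s(x, y) := by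
      induction G.ends f using Sym2.inductionOn with
      | hf x y => exact ⟨x, y, rfl⟩
    simp only [hf, Sym2.map_pair_eq] at h
    rcases Quotient.eq''.mp (h : _ = _) with (rfl | hxy)
    · exact G.loopless f (by rw [hf]; exact rfl)
    · exact hff (by rw [hf, hxy])

end Multigraph

namespace Multigraph

variable {V E : Type*} (G : Multigraph V E)

lemma reach_mono {F F' : Set E} (h : F ⊆ F') {u v : V} (hr : G.Reach F u v) :
    G.Reach F' u v :=
  Relation.ReflTransGen.mono (fun _ _ ⟨e, he, hh⟩ => ⟨e, h he, hh⟩) _ _ hr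

lemma reach_symm {F : Set E} : Symmetric (G.Reach F) :=
  fun x y h => (@Relation.ReflTransGen.stdSymm _ _ ⟨fun x y ⟨e, he, hh⟩ => ⟨e, he, by rwa [Sym2.eq_swap]⟩⟩).symm x y h

/-- The setoid of connectivity via edges in `F`. -/
def reachSetoid (F : Set E) : Setoid V where
  r := G.Reach F
  iseqv := ⟨fun _ => Relation.ReflTransGen.refl, fun h => G.reach_symm h,
    fun h h' => Relation.ReflTransGen.trans h h'⟩

lemma acyclic_mono {F F' : Set E} (h : F ⊆ F') (hF' : G.Acyclic F') : G.Acyclic F := by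
  intro e he u v huv hr
  exact hF' e (h he) u v huv (G.reach_mono (Set.diff_subset_diff_left h) hr)

lemma sym2_exists (z : Sym2 V) : ∃ a b : V, z = s(a, b) :=
  Sym2.ind (fun a b => ⟨a, b, rfl⟩) z

lemma card_quot_add_ncard_le [Finite V] (F : Set E) (hFin : F.Finite) (hF : G.Acyclic F) :
    Nat.card (Quotient (G.reachSetoid F)) + F.ncard ≤ Nat.card V := by
  revert hF
  refine Set.Finite.induction_on F hFin ?_ ?_
  case refine_1 =>
    intro _
    simpa using Nat.card_le_card_of_surjective _ (Quotient.mk_surjective)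
  case refine_2 =>
    intro e F heF hFfin ih hF
    have ih' := ih (G.acyclic_mono (Set.subset_insert e F) hF)
    have key : Nat.card (Quotient (G.reachSetoid (insert e F))) <
        Nat.card (Quotient (G.reachSetoid F)) := by
      have hmono : ∀ u v : V, G.Reach F u v → G.Reach (insert e F) u v :=
        fun u v => G.reach_mono (Set.subset_insert e F)
      set φ : Quotient (G.reachSetoid F) → Quotient (G.reachSetoid (insert e F)) :=
        Quotient.map id (fun u v h => hmono u v h) with hφ
      have hsurj : Function.Surjective φ := fun q => by
        obtain ⟨x, rfl⟩ := Quotient.exists_rep q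
        exact ⟨Quotient.mk _ x, rfl⟩
      obtain ⟨a, b, hab⟩ : ∃ a b : V, G.ends e = s(a, b) := sym2_exists _
      have hnr : ¬ G.Reach F a b := by
        intro hr
        refine hF e (Set.mem_insert e F) a b hab (G.reach_mono ?_ hr)
        intro x hx
        exact ⟨Set.mem_insert_of_mem _ hx, fun hxe => heF (Set.mem_singleton_iff.mp hxe ▸ hx)⟩
      have hninj : ¬ Function.Injective φ := by
        intro hinj
        have : (Quotient.mk (G.reachSetoid F) a) = Quotient.mk _ b := by
          apply hinj
          apply Quotient.sound
          exact Relation.ReflTransGen.single ⟨e, Set.mem_insert e F, hab⟩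
        exact hnr (Quotient.exact this)
      have := Fintype.ofFinite V
      have := Fintype.ofFinite (Quotient (G.reachSetoid F))
      have := Fintype.ofFinite (Quotient (G.reachSetoid (insert e F)))
      simpa only [Nat.card_eq_fintype_card] using
        Fintype.card_lt_of_surjective_not_injective φ hsurj hninj
    rw [Set.ncard_insert_of_notMem heF hFfin]
    omega

lemma connectedOn_of_spanningTree [Finite V] [Nonempty V] {T : Set E} (hTfin : T.Finite)
    (hT : G.IsSpanningTree T) : G.ConnectedOn T := by
  obtain ⟨hcard, hac⟩ := hT
  have h1 : 1 ≤ Nat.card V := Nat.one_le_iff_ne_zero.mpr (Nat.card_ne_zero.mpr ⟨‹_›, ‹_›⟩)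
  have := G.card_quot_add_ncard_le T hTfin hac
  rw [hcard] at this
  have hq : Nat.card (Quotient (G.reachSetoid T)) ≤ 1 := by omega
  have hsub : Subsingleton (Quotient (G.reachSetoid T)) :=
    Finite.card_le_one_iff_subsingleton.mp hq
  intro u v
  exact Quotient.exact (hsub.elim (Quotient.mk _ u) (Quotient.mk _ v))

/-- The fundamental cut of a tree edge `f`: all edges whose endpoints are separated
by removing `f` from `T`. -/
def fundCut (T : Set E) (f : E) : Set E :=
  {e : E | ∀ u v : V, G.ends e = s(u, v) → ¬ G.Reach (T \ {f}) u v}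

lemma mem_fundCut_of_exists {T : Set E} {f e : E} {u v : V}
    (huv : G.ends e = s(u, v)) (h : ¬ G.Reach (T \ {f}) u v) : e ∈ G.fundCut T f := by
  intro a b hab
  rw [huv, Sym2.eq_iff] at hab
  rcases hab with ⟨rfl, rfl⟩ | ⟨rfl, rfl⟩
  · exact h
  · exact fun hr => h (G.reach_symm hr)

lemma fundCut_isBond [Finite V] [Nonempty V] {T : Set E} (hTfin : T.Finite)
    (hT : G.IsSpanningTree T) {f : E} (hf : f ∈ T) : G.IsBond (G.fundCut T f) := by
  obtain ⟨a, b, hab⟩ : ∃ a b : V, G.ends f = s(a, b) := sym2_exists _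
  have hnab : ¬ G.Reach (T \ {f}) a b := hT.2 f hf a b hab
  have hconn : G.ConnectedOn T := G.connectedOn_of_spanningTree hTfin hT
  -- every vertex is in the class of a or of b
  have htwo : ∀ x : V, G.Reach (T \ {f}) x a ∨ G.Reach (T \ {f}) x b := by
    intro x
    have hx : G.Reach T a x := hconn a x
    induction hx with
    | refl => exact Or.inl Relation.ReflTransGen.refl
    | @tail y z hy hyz ih =>
      obtain ⟨e, heT, hez⟩ := hyz
      by_cases hef : e = f
      · subst hef
        rw [hab, Sym2.eq_iff] at hez
        rcases hez with ⟨rfl, rfl⟩ | ⟨rfl, rfl⟩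
        · exact Or.inr Relation.ReflTransGen.refl
        · exact Or.inl Relation.ReflTransGen.refl
      · have hstep : G.Reach (T \ {f}) z y :=
          Relation.ReflTransGen.single ⟨e, ⟨heT, hef⟩, by rwa [Sym2.eq_swap]⟩
        rcases ih with h | h
        · exact Or.inl (hstep.trans h)
        · exact Or.inr (hstep.trans h)
  -- reach in the complement of the cut implies reach in T \ {f}
  have hcompl : ∀ x y : V, G.Reach (G.fundCut T f)ᶜ x y → G.Reach (T \ {f}) x y := by
    intro x y hxy
    induction hxy with
    | refl => exact Relation.ReflTransGen.refl
    | @tail p q hp hpq ih =>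
      obtain ⟨e, he, hepq⟩ := hpq
      have : ¬ ∀ u v : V, G.ends e = s(u, v) → ¬ G.Reach (T \ {f}) u v := he
      push_neg at this
      obtain ⟨u, v, huv, hruv⟩ := this
      rw [hepq, Sym2.eq_iff] at huv
      have hr : G.Reach (T \ {f}) p q := by
        rcases huv with ⟨rfl, rfl⟩ | ⟨rfl, rfl⟩
        · exact hruv
        · exact G.reach_symm hruv
      exact ih.trans hr
  constructor
  · intro hco
    exact hnab (hcompl a b (hco a b))
  · intro C' hC' hcut
    apply hcut
    obtain ⟨hsub, hne⟩ := Set.ssubset_iff_subset_ne.mp hC'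
    obtain ⟨g, hgC, hgC'⟩ : ∃ g, g ∈ G.fundCut T f ∧ g ∉ C' := by
      by_contra h
      push_neg at h
      exact hne (Set.Subset.antisymm hsub h)
    -- T \ {f} ⊆ C'ᶜ
    have hTsub : T \ {f} ⊆ C'ᶜ := by
      intro t ht htC'
      have : t ∈ G.fundCut T f := hsub htC'
      obtain ⟨x, y, hxy⟩ : ∃ x y : V, G.ends t = s(x, y) := sym2_exists _
      exact this x y hxy (Relation.ReflTransGen.single ⟨t, ht, hxy⟩)
    have hRsub : ∀ x y : V, G.Reach (T \ {f}) x y → G.Reach C'ᶜ x y :=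
      fun x y => G.reach_mono hTsub
    -- g crosses between the two classes
    obtain ⟨p, q, hpq⟩ : ∃ p q : V, G.ends g = s(p, q) := sym2_exists _
    have hnpq : ¬ G.Reach (T \ {f}) p q := hgC p q hpq
    have hgstep : G.Reach C'ᶜ p q := Relation.ReflTransGen.single ⟨g, hgC', hpq⟩
    -- p,q lie in different classes; wlog p ~ a, q ~ b
    have hcross : G.Reach C'ᶜ a b := by
      rcases htwo p with hpa | hpb
      · rcases htwo q with hqa | hqb
        · exact absurd (hpa.trans (G.reach_symm hqa)) hnpq
        · exact ((hRsub _ _ (G.reach_symm hpa)).trans hgstep).trans (hRsub _ _ hqb)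
      · rcases htwo q with hqa | hqb
        · exact ((hRsub _ _ (G.reach_symm hqa)).trans
            (G.reach_symm hgstep)).trans (hRsub _ _ hpb)
        · exact absurd (hpb.trans (G.reach_symm hqb)) hnpq
    intro x y
    have hx := htwo x
    have hy := htwo y
    have hab' : G.Reach C'ᶜ b a := G.reach_symm hcross
    rcases hx with hx | hx <;> rcases hy with hy | hy
    · exact (hRsub _ _ hx).trans (G.reach_symm (hRsub _ _ hy))
    · exact ((hRsub _ _ hx).trans hcross).trans (G.reach_symm (hRsub _ _ hy))
    · exact ((hRsub _ _ hx).trans hab').trans (G.reach_symm (hRsub _ _ hy))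
    · exact (hRsub _ _ hx).trans (G.reach_symm (hRsub _ _ hy))

lemma ncard_le_maxBondSize [Fintype E] {C : Set E} (hC : G.IsBond C) :
    C.ncard ≤ G.maxBondSize := by
  apply le_csSup
  · refine ⟨Fintype.card E, ?_⟩
    rintro n ⟨C', _, rfl⟩
    simpa [Set.ncard_univ, Nat.card_eq_fintype_card] using
      Set.ncard_le_ncard (Set.subset_univ C') Set.finite_univ
  · exact ⟨C, hC, rfl⟩

end Multigraph


open Multigraph in
/-- For weights `w e = 1/λ_e`, a fixed minimum spanning tree `T^OPT`, and
`e* := e` for `e ∈ T^OPT` and otherwise a maximum-weight edge other than `e` on the unique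
cycle in `T^OPT ∪ {e}`:  `Σ_{e∈E} (1/b − λ_e/λ_{e*}) ≤ 0`, where `b = |B(G)|`. -/
theorem sum_inv_maxBondSize_sub_ratio_nonpos {V E : Type*} [Finite V] [Fintype E]
    (G : Multigraph V E) (hG : G.Connected)
    (lam : E → ℝ) (hlam : ∀ e, 0 < lam e)
    (TOPT : Set E) (hOPT : G.IsMST (fun e => 1 / lam e) TOPT)
    (estar : E → E)
    (hstar : ∀ e : E,
      (e ∈ TOPT → estar e = e) ∧
      (e ∉ TOPT → ∃ u v : V, G.ends e = s(u, v) ∧ G.OnPath TOPT u v (estar e) ∧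
        ∀ g, G.OnPath TOPT u v g → 1 / lam g ≤ 1 / lam (estar e))) :
    ∑ e : E, (1 / (G.maxBondSize : ℝ) - lam e / lam (estar e)) ≤ 0 := by
  classical
  by_cases hE : IsEmpty E
  · simp [Finset.univ_eq_empty]
  rw [not_isEmpty_iff] at hE
  obtain ⟨e₀⟩ := hE
  obtain ⟨a₀, b₀, hab₀⟩ : ∃ a b : V, G.ends e₀ = s(a, b) := sym2_exists _
  haveI : Nonempty V := ⟨a₀⟩
  set b : ℕ := G.maxBondSize with hbdef
  have hratio_nonneg : ∀ e : E, 0 ≤ lam e / lam (estar e) :=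
    fun e => le_of_lt (div_pos (hlam e) (hlam _))
  by_cases hb0 : b = 0
  · rw [hb0]
    simp only [Nat.cast_zero, div_zero, zero_sub]
    apply Finset.sum_nonpos
    intro e _
    simpa using hratio_nonneg e
  -- main case
  have hTfin : TOPT.Finite := Set.toFinite _
  set T' : Finset E := hTfin.toFinset with hT'def
  -- every edge lies in the fundamental cut of some tree edge
  have hmem : ∀ e : E, ∃ f ∈ TOPT, e ∈ G.fundCut TOPT f := by
    intro e
    by_cases he : e ∈ TOPT
    · exact ⟨e, he, fun u v huv => hOPT.1.2 e he u v huv⟩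
    · obtain ⟨u, v, huv, ⟨hfT, hnr⟩, -⟩ := (hstar e).2 he
      exact ⟨estar e, hfT, G.mem_fundCut_of_exists huv hnr⟩
  -- each fundamental cut has size at most b
  have hcutle : ∀ f ∈ TOPT, (G.fundCut TOPT f).ncard ≤ b :=
    fun f hf => G.ncard_le_maxBondSize (G.fundCut_isBond hTfin hOPT.1 hf)
  -- counting: |E| ≤ |T'| * b
  have hcount : Fintype.card E ≤ T'.card * b := by
    have hsubset : (Finset.univ : Finset E) ⊆
        T'.biUnion (fun f => (Set.toFinite (G.fundCut TOPT f)).toFinset) := by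
      intro e _
      obtain ⟨f, hfT, hef⟩ := hmem e
      exact Finset.mem_biUnion.mpr ⟨f, hTfin.mem_toFinset.mpr hfT,
        (Set.toFinite _).mem_toFinset.mpr hef⟩
    calc Fintype.card E = (Finset.univ : Finset E).card := (Finset.card_univ).symm
      _ ≤ (T'.biUnion (fun f => (Set.toFinite (G.fundCut TOPT f)).toFinset)).card :=
          Finset.card_le_card hsubset
      _ ≤ ∑ f ∈ T', ((Set.toFinite (G.fundCut TOPT f)).toFinset).card :=
          Finset.card_biUnion_le
      _ ≤ ∑ f ∈ T', b := by
          refine Finset.sum_le_sum fun f hf => ?_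
          rw [← Set.ncard_eq_toFinset_card (G.fundCut TOPT f) (Set.toFinite _)]
          exact hcutle f (hTfin.mem_toFinset.mp hf)
      _ = T'.card * b := by rw [Finset.sum_const, smul_eq_mul]
  -- sum of ratios is at least |T'|
  have hsumge : (T'.card : ℝ) ≤ ∑ e : E, lam e / lam (estar e) := by
    have h1 : ∑ e ∈ T', lam e / lam (estar e) = (T'.card : ℝ) := by
      rw [Finset.sum_congr rfl (fun e he => ?_), Finset.sum_const, nsmul_eq_mul, mul_one]
      rw [(hstar e).1 (hTfin.mem_toFinset.mp he), div_self (ne_of_gt (hlam e))]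
    calc (T'.card : ℝ) = ∑ e ∈ T', lam e / lam (estar e) := h1.symm
      _ ≤ ∑ e : E, lam e / lam (estar e) :=
          Finset.sum_le_sum_of_subset_of_nonneg (Finset.subset_univ _)
            (fun e _ _ => hratio_nonneg e)
  have hbpos : (0 : ℝ) < (b : ℝ) := by
    exact_mod_cast Nat.pos_of_ne_zero hb0
  rw [Finset.sum_sub_distrib, Finset.sum_const, Finset.card_univ, nsmul_eq_mul, sub_nonpos]
  calc (Fintype.card E : ℝ) * (1 / (b : ℝ)) = (Fintype.card E : ℝ) / (b : ℝ) := by ring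
    _ ≤ (T'.card : ℝ) := by
        rw [div_le_iff₀ hbpos]
        exact_mod_cast hcount
    _ ≤ ∑ e : E, lam e / lam (estar e) := hsumge
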